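/- arXiv:2205.00796 — 3 statements merged into one kernel-verified Lean document; each statement's English description precedes it below -/
import Mathlib

section
/- Let n ≥ 2. If χ ∈ 1 + 2^n ℤ₂^× (i.e. χ - 1 = 2^n u with u ∈ ℤ₂^× a 2-adic unit), then (χ - 1)/log(χ) ≡ 1 + 2^{n-1} (mod 2^n ℤ₂), where log is the 2-adic logarithm. -/
private lemma norm_natCast_inv_le' (k : ℕ) (hk : k ≠ 0) :
    ‖((k : ℚ_[2]))‖⁻¹ ≤ (k : ℝ) := by
  have h0 : ((k : ℚ_[2])) ≠ 0 := Nat.cast_ne_zero.mpr hk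
  rw [Padic.norm_eq_zpow_neg_valuation h0, Padic.valuation_natCast, ← zpow_neg, neg_neg,
    zpow_natCast]
  have hdvd : (2:ℕ) ^ padicValNat 2 k ≤ k :=
    Nat.le_of_dvd (Nat.pos_of_ne_zero hk) pow_padicValNat_dvd
  exact_mod_cast hdvd

private lemma unit_sub_one' (u : ℤ_[2]ˣ) : ‖((u : ℤ_[2]) : ℚ_[2]) - 1‖ ≤ 2⁻¹ := by
  have hu : IsUnit (PadicInt.toZMod ((u : ℤ_[2]))) := u.isUnit.map PadicInt.toZMod
  have h01 : ∀ v : ZMod 2, v = 0 ∨ v = 1 := by decide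
  have h1 : PadicInt.toZMod ((u : ℤ_[2])) = 1 := by
    rcases h01 (PadicInt.toZMod ((u : ℤ_[2]))) with h | h
    · exact absurd h hu.ne_zero
    · exact h
  have h0 : PadicInt.toZMod ((u : ℤ_[2]) - 1) = 0 := by
    rw [map_sub, map_one, h1, sub_self]
  have hdvd : (2:ℤ_[2]) ∣ ((u : ℤ_[2]) - 1) := by
    have hmem : (u : ℤ_[2]) - 1 ∈ RingHom.ker (PadicInt.toZMod (p := 2)) := h0
    rw [PadicInt.ker_toZMod, PadicInt.maximalIdeal_eq_span_p,
      Ideal.mem_span_singleton] at hmem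
    exact_mod_cast hmem
  obtain ⟨w, hw⟩ := hdvd
  have h2 : ‖(2:ℤ_[2])‖ = 2⁻¹ := by simpa using PadicInt.norm_p (p := 2)
  have : ‖((u : ℤ_[2]) - 1 : ℤ_[2])‖ ≤ 2⁻¹ := by
    rw [hw, norm_mul, h2]
    calc (2:ℝ)⁻¹ * ‖w‖ ≤ 2⁻¹ * 1 := by
          gcongr; exact w.norm_le_one
      _ = 2⁻¹ := mul_one _
  calc ‖((u : ℤ_[2]) : ℚ_[2]) - 1‖ = ‖(((u : ℤ_[2]) - 1 : ℤ_[2]) : ℚ_[2])‖ := by push_cast; ring_nf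
    _ = ‖((u : ℤ_[2]) - 1 : ℤ_[2])‖ := (PadicInt.norm_def).symm
    _ ≤ 2⁻¹ := this

private lemma key_lemma (k : ℕ) (u' : ℚ_[2]) (hu1 : ‖u'‖ = 1) (hu2 : ‖u' - 1‖ ≤ 2⁻¹) :
    ∃ z : ℤ_[2],
      ((2 : ℚ_[2]) ^ (k+2) * u') /
          (∑' m : ℕ, (-1 : ℚ_[2]) ^ m *
            ((2 : ℚ_[2]) ^ (k+2) * u') ^ (m + 1) / (m + 1)) -
        (1 + 2 ^ (k + 1)) = 2 ^ (k+2) * (z : ℚ_[2]) := by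
  have h2 : ‖(2:ℚ_[2])‖ = 2⁻¹ := by simpa using Padic.norm_p (p := 2)
  set x : ℚ_[2] := (2:ℚ_[2])^(k+2) * u' with hxdef
  have hx : ‖x‖ = (2:ℝ)⁻¹^(k+2) := by
    rw [hxdef, norm_mul, norm_pow, h2, hu1, mul_one]
  set f : ℕ → ℚ_[2] := fun m : ℕ => (-1:ℚ_[2])^m * x^(m+1) / ((m : ℚ_[2]) + 1) with hfdef
  -- norm bound for each term
  have hnorm : ∀ m : ℕ, ‖f m‖ ≤ ((m:ℝ)+1) * (2:ℝ)⁻¹^((k+2)*(m+1)) := by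
    intro m
    have hfm : f m = ((-1)^m * x^(m+1)) / (((m+1 : ℕ) : ℚ_[2])) := by
      rw [hfdef]; push_cast; ring
    rw [hfm, norm_div, norm_mul, norm_pow, norm_pow, norm_neg, norm_one, one_pow, one_mul,
      hx, ← pow_mul, div_eq_mul_inv, mul_comm]
    have h1 : ‖(((m+1:ℕ)) : ℚ_[2])‖⁻¹ ≤ ((m+1:ℕ) : ℝ) := norm_natCast_inv_le' (m+1) (by omega)
    calc ‖(((m+1:ℕ)) : ℚ_[2])‖⁻¹ * (2:ℝ)⁻¹^((k+2)*(m+1))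
        ≤ ((m+1:ℕ):ℝ) * (2:ℝ)⁻¹^((k+2)*(m+1)) := by gcongr
      _ = ((m:ℝ)+1) * (2:ℝ)⁻¹^((k+2)*(m+1)) := by push_cast; ring
  -- summability
  have hsum : Summable f := by
    apply Summable.of_norm
    have h1 : Summable (fun m : ℕ => (m:ℝ) * (2:ℝ)⁻¹^m) := by
      simpa using summable_pow_mul_geometric_of_norm_lt_one (R := ℝ) 1 (r := 2⁻¹) (by norm_num)
    have h2' : Summable (fun m : ℕ => (2:ℝ)⁻¹^m) :=
      summable_geometric_of_lt_one (by norm_num) (by norm_num)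
    have hg : Summable (fun m : ℕ => ((m:ℝ)+1) * (2:ℝ)⁻¹^(m+1)) := by
      refine ((h1.add h2').mul_left ((2:ℝ)⁻¹)).congr fun m => ?_
      ring
    refine Summable.of_nonneg_of_le (fun m => norm_nonneg _)
      (fun m => (hnorm m).trans ?_) hg
    exact mul_le_mul_of_nonneg_left
      (pow_le_pow_of_le_one (by norm_num) (by norm_num) (by nlinarith)) (by positivity)
  have hsum1 : Summable (fun m => f (m+1)) := (summable_nat_add_iff 1).mpr hsum
  set T : ℚ_[2] := ∑' m : ℕ, f (m+2) with hTdef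
  set L : ℚ_[2] := ∑' m : ℕ, f m with hLdef
  have hL : L = f 0 + (f 1 + T) := by
    rw [hLdef, Summable.tsum_eq_zero_add hsum, Summable.tsum_eq_zero_add hsum1]
  have hf0 : f 0 = x := by
    rw [hfdef]; norm_num
  have hf1 : f 1 = -(x^2)/2 := by
    rw [hfdef]; norm_num
  -- tail bound
  have hT : ‖T‖ ≤ (2:ℝ)⁻¹^(2*k+4) := by
    rw [hTdef]
    apply IsUltrametricDist.norm_tsum_le_of_forall_le
    intro m
    refine (hnorm (m+2)).trans ?_
    have hexp : (k+2)*(m+2+1) = (k+2)*(m+1) + (2*k+4) := by ring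
    rw [hexp, pow_add]
    push_cast
    have hnat : (m+3 : ℕ) ≤ 2^((k+2)*(m+1)) := by
      calc m+3 ≤ 2^(m+2) := Nat.lt_two_pow_self (n := m+2)
        _ ≤ 2^((k+2)*(m+1)) := Nat.pow_le_pow_right (by norm_num) (by nlinarith)
    have h1 : ((m:ℝ)+2+1) ≤ 2^((k+2)*(m+1)) := by exact_mod_cast hnat
    calc ((m:ℝ)+2+1) * ((2:ℝ)⁻¹^((k+2)*(m+1)) * (2:ℝ)⁻¹^(2*k+4))
        ≤ (2:ℝ)^((k+2)*(m+1)) * ((2:ℝ)⁻¹^((k+2)*(m+1)) * (2:ℝ)⁻¹^(2*k+4)) := by gcongr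
      _ = ((2:ℝ) * 2⁻¹)^((k+2)*(m+1)) * (2:ℝ)⁻¹^(2*k+4) := by rw [mul_pow]; ring
      _ = (2:ℝ)⁻¹^(2*k+4) := by norm_num
  -- norm of f 1
  have hnf1 : ‖f 1‖ = (2:ℝ)⁻¹^(2*k+3) := by
    rw [hf1, norm_div, norm_neg, norm_pow, hx, h2, ← pow_mul]
    rw [show (k+2)*2 = (2*k+3)+1 from by ring, pow_succ]
    field_simp
  -- norm of L
  have hs : ‖f 1 + T‖ ≤ (2:ℝ)⁻¹^(2*k+3) := by
    refine (Padic.nonarchimedean _ _).trans (max_le hnf1.le (hT.trans ?_))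
    exact pow_le_pow_of_le_one (by norm_num) (by norm_num) (by omega)
  have hslt : ‖f 1 + T‖ < ‖x‖ := by
    rw [hx]
    refine hs.trans_lt ?_
    exact pow_lt_pow_right_of_lt_one₀ (by norm_num) (by norm_num) (by omega)
  have hLnorm : ‖L‖ = (2:ℝ)⁻¹^(k+2) := by
    rw [hL, hf0, Padic.add_eq_max_of_ne (ne_of_gt hslt).symm.symm,
      max_eq_left hslt.le, hx]
  have hLne : L ≠ 0 := by
    intro h
    rw [h, norm_zero] at hLnorm
    exact absurd hLnorm.symm (by positivity)
  -- the key algebraic bound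
  have hc : ‖(1 + 2^(k+1) : ℚ_[2])‖ ≤ 1 := by
    refine (Padic.nonarchimedean _ _).trans (max_le (by norm_num) ?_)
    rw [norm_pow, h2]
    exact pow_le_one₀ (by norm_num) (by norm_num)
  have hkey : ‖x - (1 + 2^(k+1)) * L‖ ≤ (2:ℝ)⁻¹^(2*k+4) := by
    have hid : x - (1 + 2^(k+1) : ℚ_[2]) * L =
        2^(2*k+3)*(u'^2 - u') + (2^(3*k+4)*u'^2 + (-(1+2^(k+1)))*T) := by
      rw [hL, hf0, hf1, hxdef]; ring
    rw [hid]
    refine (Padic.nonarchimedean _ _).trans (max_le ?_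
      ((Padic.nonarchimedean _ _).trans (max_le ?_ ?_)))
    · rw [norm_mul, norm_pow, h2, show u'^2 - u' = u'*(u'-1) from by ring,
        norm_mul, hu1, one_mul]
      calc (2:ℝ)⁻¹^(2*k+3) * ‖u'-1‖ ≤ (2:ℝ)⁻¹^(2*k+3) * 2⁻¹ := by gcongr
        _ = (2:ℝ)⁻¹^(2*k+4) := by rw [← pow_succ]
    · rw [norm_mul, norm_pow, h2, norm_pow, hu1, one_pow, mul_one]
      exact pow_le_pow_of_le_one (by norm_num) (by norm_num) (by omega)
    · rw [norm_mul, norm_neg]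
      calc ‖(1+2^(k+1):ℚ_[2])‖ * ‖T‖ ≤ 1 * ((2:ℝ)⁻¹^(2*k+4)) :=
            mul_le_mul hc hT (norm_nonneg _) zero_le_one
        _ = (2:ℝ)⁻¹^(2*k+4) := one_mul _
  -- assemble
  have hq : x / L - (1 + 2^(k+1)) = (x - (1+2^(k+1))*L)/L := by
    field_simp
  have hqnorm : ‖x / L - (1 + 2^(k+1))‖ ≤ (2:ℝ)⁻¹^(k+2) := by
    rw [hq, norm_div, hLnorm, div_le_iff₀ (by positivity)]
    calc ‖x - (1+2^(k+1))*L‖ ≤ (2:ℝ)⁻¹^(2*k+4) := hkey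
      _ = (2:ℝ)⁻¹^(k+2) * (2:ℝ)⁻¹^(k+2) := by rw [← pow_add]; congr 1; ring
  have hzn : ‖(x / L - (1 + 2^(k+1))) / 2^(k+2)‖ ≤ 1 := by
    rw [norm_div, norm_pow, h2, div_le_one (by positivity)]
    exact hqnorm
  refine ⟨⟨(x / L - (1 + 2^(k+1))) / 2^(k+2), hzn⟩, ?_⟩
  show x / L - (1 + 2^(k+1)) = 2^(k+2) * ((x / L - (1 + 2^(k+1))) / 2^(k+2))
  rw [mul_comm, div_mul_cancel₀ _ (pow_ne_zero _ two_ne_zero)]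

/-- For `n ≥ 2` and a 2-adic unit `u`, setting `χ = 1 + 2^n u ∈ 1 + 2^n ℤ₂ˣ`, the quotient
`(χ - 1)/log χ` (with `log` the 2-adic logarithm, given by its usual power series) is congruent
to `1 + 2^(n-1)` modulo `2^n ℤ₂`. -/
theorem statement0 (n : ℕ) (hn : 2 ≤ n) (u : ℤ_[2]ˣ) :
    ∃ z : ℤ_[2],
      ((2 : ℚ_[2]) ^ n * ((u : ℤ_[2]) : ℚ_[2])) /
          (∑' m : ℕ, (-1 : ℚ_[2]) ^ m *
            ((2 : ℚ_[2]) ^ n * ((u : ℤ_[2]) : ℚ_[2])) ^ (m + 1) / (m + 1)) -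
        (1 + 2 ^ (n - 1)) = 2 ^ n * (z : ℚ_[2]) := by
  obtain ⟨k, rfl⟩ : ∃ k, n = k + 2 := ⟨n - 2, by omega⟩
  have hu1 : ‖((u : ℤ_[2]) : ℚ_[2])‖ = 1 :=
    (PadicInt.norm_def).symm.trans (PadicInt.norm_units u)
  exact key_lemma k _ hu1 (unit_sub_one' u)
end

section
/- Let A be a 2-adically (or π_n-adically) complete ring of power series O_K[[π_n]], φ a continuous ring endomorphism with φ(π_n) = (1+π_n)² − 1, and L ∈ π_n O_K[[π_n]]. Then Y := −Σ_{i≥0} φ^i(L/2) converges in (1/2)O_K[[π_n]] and satisfies (φ − 1)(Y) = L/2. -/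
/-!
Write `g_i = φ^i(L/2)`. Every coefficient of `(1+X)² - 1 = 2X + X²` is integral and the one of
`X^j` has norm at most `2^(j-2)`, so the `j`-th coefficient of its `m`-th power has norm at most
`4^(-m) 2^j`. Since `g_i` has no constant term, feeding this into the composition formula shows
that `φ` halves the bound `‖coeff j g‖ ≤ C 2^j`; hence the coefficients of `g_i` tend to `0`
and the series `Σ g_i` converges coefficientwise to some `S`, with `‖coeff j S‖ ≤ 2` by the
ultrametric inequality. As `φ` commutes with coefficientwise sums, `φ S = Σ g_{i+1} = S - g_0`,
so `Y = -S` solves `(φ - 1) Y = L/2`.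
-/

open PowerSeries

/-- The Frobenius substitution `g(X) ↦ g((1+X)² - 1)` on `ℚ₂[[X]]` (acting trivially on the
coefficients, as the Frobenius of the unramified extension `K = ℚ₂` does), given coefficientwise
by the (finite) composition formula. -/
noncomputable def frobSubst (g : PowerSeries ℚ_[2]) : PowerSeries ℚ_[2] :=
  PowerSeries.mk fun j => ∑ m ∈ Finset.range (j + 1),
    (coeff (R := ℚ_[2]) m g) * coeff (R := ℚ_[2]) j (((1 + X) ^ 2 - 1 : PowerSeries ℚ_[2]) ^ m)

open scoped PowerSeries.WithPiTopology

section UltrametricCoeffBounds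

variable {R : Type*} [NormedRing R] [IsUltrametricDist R]

theorem norm_coeff_mul_le_of_geometric {f g : R⟦X⟧} {a b ρ : ℝ} (ha : 0 ≤ a) (hb : 0 ≤ b)
    (hρ : 0 ≤ ρ) (hf : ∀ j, ‖coeff j f‖ ≤ a * ρ ^ j) (hg : ∀ j, ‖coeff j g‖ ≤ b * ρ ^ j)
    (j : ℕ) : ‖coeff j (f * g)‖ ≤ a * b * ρ ^ j := by
  rw [coeff_mul]
  refine IsUltrametricDist.norm_sum_le_of_forall_le_of_nonneg (by positivity) fun p hp => ?_
  rw [← Finset.HasAntidiagonal.mem_antidiagonal.mp hp]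
  calc ‖coeff p.1 f * coeff p.2 g‖ ≤ ‖coeff p.1 f‖ * ‖coeff p.2 g‖ := norm_mul_le _ _
    _ ≤ a * ρ ^ p.1 * (b * ρ ^ p.2) :=
        mul_le_mul (hf _) (hg _) (norm_nonneg _) (by positivity)
    _ = a * b * ρ ^ (p.1 + p.2) := by ring

theorem norm_coeff_pow_le_of_geometric [NormOneClass R] {f : R⟦X⟧} {a ρ : ℝ} (ha : 0 ≤ a)
    (hρ : 0 ≤ ρ) (hf : ∀ j, ‖coeff j f‖ ≤ a * ρ ^ j) (m j : ℕ) :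
    ‖coeff j (f ^ m)‖ ≤ a ^ m * ρ ^ j := by
  induction m generalizing j with
  | zero =>
    rw [pow_zero, pow_zero, one_mul, coeff_one]
    split_ifs with hj
    · simp [hj]
    · simpa using pow_nonneg hρ j
  | succ m ih =>
    rw [pow_succ, pow_succ]
    exact norm_coeff_mul_le_of_geometric (pow_nonneg ha m) ha hρ ih hf j

end UltrametricCoeffBounds

noncomputable def frobPoly : ℚ_[2]⟦X⟧ := (1 + X) ^ 2 - 1

theorem coeff_frobSubst (g : ℚ_[2]⟦X⟧) (j : ℕ) :
    coeff j (frobSubst g) = ∑ m ∈ Finset.range (j + 1), coeff m g * coeff j (frobPoly ^ m) :=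
  coeff_mk _ _

theorem coeff_frobPoly (j : ℕ) :
    coeff j frobPoly = if j = 1 then 2 else if j = 2 then 1 else 0 := by
  have : frobPoly = 2 * X + X ^ 2 := by unfold frobPoly; ring
  rw [this, map_add, coeff_X_pow, ← map_ofNat C 2, coeff_C_mul, coeff_X]
  split_ifs <;> simp_all

theorem norm_two_padic : ‖(2 : ℚ_[2])‖ = 2⁻¹ := by
  simpa using Padic.norm_p (p := 2)

theorem norm_coeff_frobPoly_pow_le_one (m j : ℕ) : ‖coeff j (frobPoly ^ m)‖ ≤ 1 := by
  have hP (k : ℕ) : ‖coeff k frobPoly‖ ≤ 1 * 1 ^ k := by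
    rw [coeff_frobPoly]
    split_ifs <;> norm_num [norm_two_padic]
  simpa using norm_coeff_pow_le_of_geometric zero_le_one zero_le_one hP m j

theorem norm_coeff_frobPoly_pow_le (m j : ℕ) :
    ‖coeff j (frobPoly ^ m)‖ ≤ 4⁻¹ ^ m * 2 ^ j := by
  have hP (k : ℕ) : ‖coeff k frobPoly‖ ≤ 4⁻¹ * 2 ^ k := by
    rw [coeff_frobPoly]
    split_ifs with h1 h2
    · subst h1; norm_num [norm_two_padic]
    · subst h2; norm_num
    · simp only [norm_zero]; positivity
  exact norm_coeff_pow_le_of_geometric (by norm_num) zero_le_two hP m j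

theorem coeff_zero_frobSubst (g : ℚ_[2]⟦X⟧) : coeff 0 (frobSubst g) = coeff 0 g := by
  simp [coeff_frobSubst]

theorem frobSubst_neg (g : ℚ_[2]⟦X⟧) : frobSubst (-g) = -frobSubst g := by
  ext j
  simp [coeff_frobSubst, Finset.sum_neg_distrib]

theorem norm_coeff_frobSubst_le {g : ℚ_[2]⟦X⟧} {c : ℝ} (hg : ∀ m, ‖coeff m g‖ ≤ c) (j : ℕ) :
    ‖coeff j (frobSubst g)‖ ≤ c := by
  rw [coeff_frobSubst]
  refine IsUltrametricDist.norm_sum_le_of_forall_le_of_nonneg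
    ((norm_nonneg _).trans (hg 0)) fun m _ => ?_
  rw [norm_mul]
  simpa using mul_le_mul (hg m) (norm_coeff_frobPoly_pow_le_one m j) (norm_nonneg _)
    ((norm_nonneg _).trans (hg 0))

theorem norm_coeff_frobSubst_le_half {g : ℚ_[2]⟦X⟧} {C : ℝ} (h0 : coeff 0 g = 0)
    (hg : ∀ m, ‖coeff m g‖ ≤ C * 2 ^ m) (j : ℕ) :
    ‖coeff j (frobSubst g)‖ ≤ C / 2 * 2 ^ j := by
  have hC : 0 ≤ C := by simpa using (norm_nonneg _).trans (hg 0)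
  rw [coeff_frobSubst]
  refine IsUltrametricDist.norm_sum_le_of_forall_le_of_nonneg (by positivity) fun m _ => ?_
  rcases Nat.eq_zero_or_pos m with rfl | hm
  · rw [h0, zero_mul, norm_zero]; positivity
  rw [norm_mul]
  calc ‖coeff m g‖ * ‖coeff j (frobPoly ^ m)‖ ≤ C * 2 ^ m * (4⁻¹ ^ m * 2 ^ j) :=
        mul_le_mul (hg m) (norm_coeff_frobPoly_pow_le m j) (norm_nonneg _) (by positivity)
    _ = C * 2 ^ j * 2⁻¹ ^ m := by
        rw [show (4⁻¹ : ℝ) = 2⁻¹ * 2⁻¹ by norm_num, mul_pow, inv_pow]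
        field_simp
    _ ≤ C * 2 ^ j * 2⁻¹ ^ 1 := mul_le_mul_of_nonneg_left
        (pow_le_pow_of_le_one (by norm_num) (by norm_num) hm) (by positivity)
    _ = C / 2 * 2 ^ j := by ring

theorem norm_coeff_iterate_frobSubst_le {g : ℚ_[2]⟦X⟧} {c : ℝ} (hg : ∀ m, ‖coeff m g‖ ≤ c)
    (i j : ℕ) : ‖coeff j (frobSubst^[i] g)‖ ≤ c := by
  induction i generalizing j with
  | zero => exact hg j
  | succ i ih =>
    rw [Function.iterate_succ_apply']
    exact norm_coeff_frobSubst_le ih j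

theorem coeff_zero_iterate_frobSubst (g : ℚ_[2]⟦X⟧) (i : ℕ) :
    coeff 0 (frobSubst^[i] g) = coeff 0 g := by
  induction i with
  | zero => rfl
  | succ i ih => rw [Function.iterate_succ_apply', coeff_zero_frobSubst, ih]

theorem norm_coeff_iterate_frobSubst_le_geometric {g : ℚ_[2]⟦X⟧} {C : ℝ} (h0 : coeff 0 g = 0)
    (hg : ∀ m, ‖coeff m g‖ ≤ C * 2 ^ m) (i j : ℕ) :
    ‖coeff j (frobSubst^[i] g)‖ ≤ C / 2 ^ i * 2 ^ j := by
  induction i generalizing j with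
  | zero => simpa using hg j
  | succ i ih =>
    rw [Function.iterate_succ_apply', pow_succ, ← div_div]
    exact norm_coeff_frobSubst_le_half ((coeff_zero_iterate_frobSubst g i).trans h0) ih j

theorem summable_iterate_frobSubst {g : ℚ_[2]⟦X⟧} {C : ℝ} (h0 : coeff 0 g = 0)
    (hg : ∀ m, ‖coeff m g‖ ≤ C * 2 ^ m) : Summable fun i => frobSubst^[i] g := by
  rw [WithPiTopology.summable_iff_summable_coeff]
  intro j
  apply NonarchimedeanAddGroup.summable_of_tendsto_cofinite_zero
  rw [Nat.cofinite_eq_atTop, tendsto_zero_iff_norm_tendsto_zero]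
  refine squeeze_zero (fun i => norm_nonneg _)
    (norm_coeff_iterate_frobSubst_le_geometric h0 hg · j) ?_
  simpa [div_eq_mul_inv, mul_right_comm] using
    (tendsto_pow_atTop_nhds_zero_of_lt_one (by norm_num : (0 : ℝ) ≤ 2⁻¹)
      (by norm_num)).const_mul (C * 2 ^ j)

theorem HasSum.frobSubst {ι : Type*} {f : ι → ℚ_[2]⟦X⟧} {s : ℚ_[2]⟦X⟧} (hf : HasSum f s) :
    HasSum (fun i => frobSubst (f i)) (frobSubst s) := by
  rw [WithPiTopology.hasSum_iff_hasSum_coeff] at hf ⊢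
  intro j
  simp only [coeff_frobSubst]
  exact hasSum_sum fun m _ => (hf m).mul_right _

theorem frobSubst_eq_sub_of_hasSum_iterate {g s : ℚ_[2]⟦X⟧}
    (hs : HasSum (fun i => frobSubst^[i] g) s) : frobSubst s = s - g := by
  have hshift : HasSum (fun i => frobSubst^[i + 1] g) (frobSubst s) := by
    simpa only [Function.iterate_succ_apply'] using hs.frobSubst
  exact hshift.unique (by simpa using (hasSum_nat_add_iff' 1).mpr hs)

/-- `‖coeff‖ ≤ 1` encodes membership in `O_K[[X]]`, `‖coeff‖ ≤ 2` in `(1/2)O_K[[X]]`. -/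
theorem statement9 (L : PowerSeries ℚ_[2])
    (hL0 : coeff (R := ℚ_[2]) 0 L = 0) (hL : ∀ j, ‖coeff (R := ℚ_[2]) j L‖ ≤ 1) :
    ∃ Y : PowerSeries ℚ_[2],
      (∀ j, ‖coeff (R := ℚ_[2]) j Y‖ ≤ 2) ∧
      (∀ j, HasSum (fun i : ℕ => coeff (R := ℚ_[2]) j (frobSubst^[i] ((2 : ℚ_[2])⁻¹ • L)))
        (-(coeff (R := ℚ_[2]) j Y))) ∧
      frobSubst Y - Y = (2 : ℚ_[2])⁻¹ • L := by
  set x : ℚ_[2]⟦X⟧ := (2 : ℚ_[2])⁻¹ • L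
  have hx0 : coeff 0 x = 0 := by simp [x, hL0]
  have hx (j : ℕ) : ‖coeff j x‖ ≤ 2 := by
    simpa [x, norm_two_padic] using mul_le_mul_of_nonneg_left (hL j) zero_le_two
  have hx_geom (j : ℕ) : ‖coeff j x‖ ≤ 1 * 2 ^ j := by
    rcases Nat.eq_zero_or_pos j with rfl | hj
    · simp [hx0]
    · simpa using (hx j).trans (le_self_pow₀ one_le_two hj.ne')
  obtain ⟨S, hS⟩ := summable_iterate_frobSubst hx0 hx_geom
  have hS_coeff := (WithPiTopology.hasSum_iff_hasSum_coeff _).mp hS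
  refine ⟨-S, fun j => ?_, fun j => ?_, ?_⟩
  · rw [map_neg, norm_neg, ← (hS_coeff j).tsum_eq]
    exact IsUltrametricDist.norm_tsum_le_of_forall_le_of_nonneg zero_le_two
      (norm_coeff_iterate_frobSubst_le hx · j)
  · simpa using hS_coeff j
  · rw [frobSubst_neg, frobSubst_eq_sub_of_hasSum_iterate hS]
    abel
end

section
/- For F(X) ∈ O_K[[X]] and γ acting by γ(π_n) = (1+π_n)^{χ(γ)} − 1 with χ(γ) ∈ 1 + p^n ℤ_p, one has γ(F(π_n)) ≡ F(π_n) mod π·O_K[[π_n]], where π = (1+π_n)^{p^n} − 1. More precisely γ(F(π_n)) − F(π_n) ≡ ((χ(γ)−1)/p^n)·D F(π_n)·π mod π²·O_K[[π_n]] ⊗ ℚ_p, where D = (1+X)d/dX. -/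
open PowerSeries

/-- The binomial series `(1+X)^χ := Σ_k C(χ,k) X^k` for `χ ∈ ℤ_p`. -/
noncomputable def binomialSeriesQp (p : ℕ) [Fact p.Prime] (χ : ℤ_[p]) : PowerSeries ℚ_[p] :=
  PowerSeries.mk fun k =>
    (∏ i ∈ Finset.range k, ((χ : ℚ_[p]) - i)) / (Nat.factorial k)

/-- The action of `γ` on `F(π_n)`: substitution of `γ(π_n) = (1+π_n)^χ - 1` into `F`, given
coefficientwise by the (finite) composition formula. -/
noncomputable def gammaSubst (p : ℕ) [Fact p.Prime] (χ : ℤ_[p]) (F : PowerSeries ℚ_[p]) :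
    PowerSeries ℚ_[p] :=
  PowerSeries.mk fun j => ∑ m ∈ Finset.range (j + 1),
    coeff m F * coeff j ((binomialSeriesQp p χ - 1) ^ m)

/-!
Write `π = (1+X)^{p^n} - 1` and `χ = 1 + p^n u`. Since `(1+X)^{p^n} = 1 + π`, the binomial
series satisfies `(1+X)^χ = (1+X)(1+π)^u = (1+X)(1 + uπ + π²(…))`, so `γ` moves `X` to `X + d`
with `d = π·((1+X)u + π(…))`. Taylor's formula `F(X + d) = F(X) + d F'(X) + d²(…)` then gives
both congruences. Working over `ℤ_p` makes integrality automatic; the identity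
`(1+X)^{rs} = ((1+X)^r)^s` for `s ∈ ℤ_p` follows from the case `s ∈ ℕ` by continuity of
`s ↦ C(s,k)` and density of `ℕ` in `ℤ_p`.
-/

namespace PowerSeries

variable {R : Type*} [CommRing R]

lemma coeff_subst_of_X_dvd {a : R⟦X⟧} (ha : X ∣ a) (f : R⟦X⟧) (j : ℕ) :
    coeff j (f.subst a) = ∑ m ∈ Finset.range (j + 1), coeff m f * coeff j (a ^ m) := by
  rw [coeff_subst' (HasSubst.of_constantCoeff_zero' (X_dvd_iff.mp ha))]
  refine finsum_eq_sum_of_support_subset _ fun m hm => ?_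
  simp only [Finset.coe_range, Set.mem_Iio]
  by_contra h
  exact hm (show coeff m f • coeff j (a ^ m) = 0 by
    rw [X_pow_dvd_iff.mp (pow_dvd_pow_of_dvd ha m) j (by omega), smul_zero])

lemma subst_one_add_X_pow {a : R⟦X⟧} (ha : X ∣ a) (m : ℕ) :
    ((1 + X) ^ m : R⟦X⟧).subst a = (1 + a) ^ m := by
  have hs : HasSubst a := HasSubst.of_constantCoeff_zero' (X_dvd_iff.mp ha)
  rw [subst_pow hs, subst_add hs, subst_X hs, ← map_one (C (R := R)), subst_C]
  rfl

lemma exists_subst_eq_add_mul_sq (f : R⟦X⟧) {a : R⟦X⟧} (ha : X ∣ a) :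
    ∃ q : R⟦X⟧, f.subst a = C (coeff 0 f) + C (coeff 1 f) * a + a ^ 2 * q := by
  have hs : HasSubst a := HasSubst.of_constantCoeff_zero' (X_dvd_iff.mp ha)
  obtain ⟨q, hq⟩ : X ^ 2 ∣ f - C (coeff 0 f) - C (coeff 1 f) * X := by
    rw [X_pow_dvd_iff]
    intro j hj
    interval_cases j <;> simp [coeff_C]
  refine ⟨q.subst a, ?_⟩
  have h := congrArg (subst a) hq
  rw [subst_sub hs, subst_sub hs, subst_mul hs, subst_mul hs, subst_pow hs, subst_X hs,
    subst_C, subst_C] at h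
  change f.subst a - C _ - C _ * a = _ at h
  linear_combination h

lemma X_one_sq_dvd_subst_X_zero_add_X_one_sub (f : R⟦X⟧) :
    (MvPowerSeries.X 1 : MvPowerSeries (Fin 2) R) ^ 2 ∣
      f.subst (MvPowerSeries.X 0 + MvPowerSeries.X 1 : MvPowerSeries (Fin 2) R)
        - f.subst (MvPowerSeries.X 0 : MvPowerSeries (Fin 2) R)
        - MvPowerSeries.X 1 * (d⁄dX R f).subst (MvPowerSeries.X 0 : MvPowerSeries (Fin 2) R) := by
  classical
  rw [MvPowerSeries.X_pow_dvd_iff]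
  intro e he
  have hsplit : e = Finsupp.single 0 (e 0) + Finsupp.single 1 (e 1) := by
    ext i; fin_cases i <;> simp
  rw [map_sub, map_sub, coeff_subst_X_zero_add_X_one, coeff_subst_single,
    MvPowerSeries.X, MvPowerSeries.coeff_monomial_mul]
  interval_cases h : e 1
  · have hle : ¬ Finsupp.single 1 1 ≤ e := fun hle => by simpa [h] using hle 1
    rw [if_pos (by rw [hsplit]; simp), if_neg hle]
    simp
  · have hne : e ≠ Finsupp.single 0 (e 0) := fun heq => by
      simpa using congr($heq 1).symm.trans h
    have hle : Finsupp.single 1 1 ≤ e := fun i => by fin_cases i <;> simp [h]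
    have hsub : e - Finsupp.single 1 1 = Finsupp.single 0 (e 0) := by
      ext i; fin_cases i <;> simp [h]
    rw [if_neg hne, if_pos hle, hsub, coeff_subst_single, if_pos (by simp)]
    simp [coeff_derivative, Nat.choose_succ_self_right]
    ring

-- Specialise `f(X + Y) ≡ f(X) + Y f'(X) mod Y²` in `R⟦X, Y⟧` at `Y = d`.
theorem exists_subst_X_add_eq (f : R⟦X⟧) {d : R⟦X⟧} (hd : X ∣ d) :
    ∃ q : R⟦X⟧, f.subst (X + d) = f + d * d⁄dX R f + d ^ 2 * q := by
  obtain ⟨q, hq⟩ := X_one_sq_dvd_subst_X_zero_add_X_one_sub f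
  let b : Fin 2 → R⟦X⟧ := ![X, d]
  have hb : MvPowerSeries.HasSubst b := MvPowerSeries.hasSubst_of_constantCoeff_zero fun i => by
    fin_cases i
    · exact constantCoeff_X
    · exact X_dvd_iff.mp hd
  have hcomp (a : MvPowerSeries (Fin 2) R) (ha : HasSubst a) (g : R⟦X⟧) :
      MvPowerSeries.subst b (g.subst a) = g.subst (MvPowerSeries.subst b a) := by
    rw [subst_def, subst_def, MvPowerSeries.subst_comp_subst_apply ha.const hb]
  have h := congrArg (MvPowerSeries.subst b) hq
  rw [MvPowerSeries.subst_sub hb, MvPowerSeries.subst_sub hb, MvPowerSeries.subst_mul hb,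
    MvPowerSeries.subst_mul hb, MvPowerSeries.subst_pow hb, hcomp _ (HasSubst.X 0),
    hcomp _ (HasSubst.X 0), hcomp _ (HasSubst.of_constantCoeff_zero (by simp)),
    MvPowerSeries.subst_add hb, MvPowerSeries.subst_X hb, MvPowerSeries.subst_X hb] at h
  refine ⟨MvPowerSeries.subst b q, ?_⟩
  simp only [b, Matrix.cons_val_zero, Matrix.cons_val_one, X_subst] at h
  linear_combination h

theorem exists_subst_X_add_mul_sub_eq {π : R⟦X⟧} (hπ : X ∣ π) (c : R) (E f : R⟦X⟧) :
    ∃ B : R⟦X⟧, f.subst (X + π * (C c * (1 + X) + π * E)) - f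
      - C c * ((1 + X) * d⁄dX R f) * π = π ^ 2 * B := by
  set H := C c * (1 + X) + π * E
  obtain ⟨q, hq⟩ := exists_subst_X_add_eq f (dvd_mul_of_dvd_left hπ H)
  exact ⟨E * d⁄dX R f + H ^ 2 * q, by rw [hq]; ring⟩

lemma map_derivative {S : Type*} [CommRing S] (h : R →+* S) (f : R⟦X⟧) :
    map h (d⁄dX R f) = d⁄dX S (map h f) := by
  ext j
  simp [coeff_derivative]

lemma X_dvd_one_add_X_pow_sub_one (m : ℕ) : X ∣ ((1 + X) ^ m - 1 : R⟦X⟧) := by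
  simp [X_dvd_iff]

variable [BinomialRing R]

lemma binomialSeries_mul_natCast (r : R) (m : ℕ) :
    binomialSeries R (r * m) = binomialSeries R r ^ m := by
  induction m with
  | zero => simp
  | succ m ih => rw [Nat.cast_succ, mul_add_one, binomialSeries_add, ih, pow_succ]

lemma X_dvd_binomialSeries_sub_one (r : R) : X ∣ binomialSeries R r - 1 := by
  simp [X_dvd_iff]

end PowerSeries

lemma Ring.choose_eq_prod_div {K : Type*} [Field K] [CharZero K] (a : K) (k : ℕ) :
    Ring.choose a k = (∏ i ∈ Finset.range k, (a - i)) / k.factorial := by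
  rw [Ring.choose_eq_smul, ← Polynomial.aeval_eq_smeval, Polynomial.aeval_def,
    Polynomial.eval₂_eq_eval_map, descPochhammer_map, descPochhammer_eval_eq_prod_range,
    smul_eq_mul, div_eq_inv_mul]

namespace PadicInt

variable {p : ℕ} [Fact p.Prime]

theorem binomialSeries_mul_eq_subst (r s : ℤ_[p]) :
    binomialSeries ℤ_[p] (r * s)
      = (binomialSeries ℤ_[p] s).subst (binomialSeries ℤ_[p] r - 1) := by
  ext j
  have hnat (m : ℕ) : binomialSeries ℤ_[p] (r * m)
      = (binomialSeries ℤ_[p] (m : ℤ_[p])).subst (binomialSeries ℤ_[p] r - 1) := by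
    rw [binomialSeries_nat, subst_one_add_X_pow (X_dvd_binomialSeries_sub_one r),
      add_sub_cancel, binomialSeries_mul_natCast]
  refine congrFun (Continuous.ext_on denseRange_natCast
    (f := fun s => coeff j (binomialSeries ℤ_[p] (r * s)))
    (g := fun s => coeff j ((binomialSeries ℤ_[p] s).subst (binomialSeries ℤ_[p] r - 1)))
    ?_ ?_ ?_) s
  · simp only [binomialSeries_coeff, smul_eq_mul, mul_one]
    exact (continuous_choose j).comp (continuous_const_mul r)
  · simp only [coeff_subst_of_X_dvd (X_dvd_binomialSeries_sub_one r), binomialSeries_coeff,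
      smul_eq_mul, mul_one]
    fun_prop
  · rintro _ ⟨m, rfl⟩
    simp only [hnat]

theorem exists_binomialSeries_one_add_mul_sub_one_eq (n : ℕ) (u : ℤ_[p]) :
    ∃ E : ℤ_[p]⟦X⟧, binomialSeries ℤ_[p] (1 + p ^ n * u) - 1
      = X + ((1 + X) ^ p ^ n - 1) * (C u * (1 + X) + ((1 + X) ^ p ^ n - 1) * E) := by
  set π : ℤ_[p]⟦X⟧ := (1 + X) ^ p ^ n - 1
  have hπ : binomialSeries ℤ_[p] ((p : ℤ_[p]) ^ n) - 1 = π := by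
    rw [← Nat.cast_pow, binomialSeries_nat]
  obtain ⟨T, hT⟩ := exists_subst_eq_add_mul_sq (binomialSeries ℤ_[p] u)
    (X_dvd_one_add_X_pow_sub_one (p ^ n))
  refine ⟨(1 + X) * T, ?_⟩
  rw [binomialSeries_add, binomialSeries_mul_eq_subst, hπ, hT, ← Nat.cast_one (R := ℤ_[p]),
    binomialSeries_nat]
  simp only [binomialSeries_coeff, Ring.choose_zero_right, Ring.choose_one_right, smul_eq_mul,
    mul_one, map_one]
  ring

lemma exists_map_coe_eq {F : ℚ_[p]⟦X⟧} (hF : ∀ j, ‖coeff j F‖ ≤ 1) :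
    ∃ f : ℤ_[p]⟦X⟧, map Coe.ringHom f = F :=
  ⟨mk fun j => (⟨coeff j F, hF j⟩ : ℤ_[p]), by
    ext j; exact congrArg Coe.ringHom (coeff_mk j _)⟩

lemma norm_coeff_map_coe_le_one (f : ℤ_[p]⟦X⟧) (j : ℕ) :
    ‖coeff j (map Coe.ringHom f)‖ ≤ 1 := by
  rw [coeff_map]
  exact norm_le_one (coeff j f)

end PadicInt

section

variable {p : ℕ} [Fact p.Prime]

lemma binomialSeriesQp_eq_map (χ : ℤ_[p]) :
    binomialSeriesQp p χ = map PadicInt.Coe.ringHom (binomialSeries ℤ_[p] χ) := by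
  ext k
  rw [binomialSeriesQp, coeff_mk, coeff_map, binomialSeries_coeff, smul_eq_mul, mul_one,
    Ring.map_choose, Ring.choose_eq_prod_div]
  rfl

lemma gammaSubst_map_coe (χ : ℤ_[p]) (f : ℤ_[p]⟦X⟧) :
    gammaSubst p χ (map PadicInt.Coe.ringHom f)
      = map PadicInt.Coe.ringHom (f.subst (binomialSeries ℤ_[p] χ - 1)) := by
  have hG : binomialSeriesQp p χ - 1
      = map PadicInt.Coe.ringHom (binomialSeries ℤ_[p] χ - 1) := by
    rw [binomialSeriesQp_eq_map, map_sub, map_one]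
  ext j
  rw [gammaSubst, coeff_mk, coeff_map, coeff_subst_of_X_dvd (X_dvd_binomialSeries_sub_one χ),
    map_sum, hG]
  simp only [← map_pow, coeff_map, map_mul]

end

theorem statement17_general (p : ℕ) [Fact p.Prime] (n : ℕ)
    (χ : ℤ_[p]) (hχ : ∃ u : ℤ_[p], χ = 1 + p ^ n * u)
    (F : PowerSeries ℚ_[p]) (hF : ∀ j, ‖coeff j F‖ ≤ 1) :
    (∃ A : PowerSeries ℚ_[p], (∀ j, ‖coeff j A‖ ≤ 1) ∧
      gammaSubst p χ F - F = (((1 + X) ^ (p ^ n) - 1 : PowerSeries ℚ_[p])) * A) ∧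
    (∃ B : PowerSeries ℚ_[p], (∃ Cb : ℝ, ∀ j, ‖coeff j B‖ ≤ Cb) ∧
      gammaSubst p χ F - F -
          C (((χ - 1 : ℤ_[p]) : ℚ_[p]) / (p ^ n : ℚ_[p])) *
            ((1 + X) * PowerSeries.derivativeFun F) *
            (((1 + X) ^ (p ^ n) - 1 : PowerSeries ℚ_[p]))
        = (((1 + X) ^ (p ^ n) - 1 : PowerSeries ℚ_[p])) ^ 2 * B) := by
  obtain ⟨u, rfl⟩ := hχ
  obtain ⟨f, rfl⟩ := PadicInt.exists_map_coe_eq hF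
  obtain ⟨E, hE⟩ := PadicInt.exists_binomialSeries_one_add_mul_sub_one_eq n u
  obtain ⟨B, hB⟩ := exists_subst_X_add_mul_sub_eq (X_dvd_one_add_X_pow_sub_one (p ^ n)) u E f
  rw [← hE] at hB
  have hu : (((1 + p ^ n * u - 1 : ℤ_[p]) : ℚ_[p]) / (p ^ n : ℚ_[p])) = u := by
    have : (p : ℚ_[p]) ^ n ≠ 0 := pow_ne_zero n (Nat.cast_ne_zero.mpr (Fact.out : p.Prime).ne_zero)
    push_cast
    field_simp
    ring
  have hB' := congrArg (map PadicInt.Coe.ringHom) hB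
  simp only [map_sub, map_mul, map_pow, map_add, map_one, map_X, map_C, map_derivative] at hB'
  rw [← gammaSubst_map_coe] at hB'
  refine ⟨⟨map PadicInt.Coe.ringHom
      (C u * ((1 + X) * d⁄dX ℤ_[p] f) + ((1 + X) ^ p ^ n - 1) * B),
    PadicInt.norm_coeff_map_coe_le_one _, ?_⟩,
    ⟨map PadicInt.Coe.ringHom B, ⟨1, PadicInt.norm_coeff_map_coe_le_one B⟩, ?_⟩⟩
  · simp only [map_sub, map_mul, map_pow, map_add, map_one, map_X, map_C, map_derivative]
    linear_combination hB'
  · rw [hu]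
    exact hB'

/-- Benois' Lemma 2.2.1: for `F(X) ∈ O[[X]]` and `γ` acting by `π_n ↦ (1+π_n)^{χ(γ)} - 1` with
`χ(γ) ∈ 1 + p^n ℤ_p`, one has `γ(F) ≡ F mod π·O[[π_n]]` where `π = (1+π_n)^{p^n} - 1`; more
precisely `γ(F) - F ≡ ((χ(γ)-1)/p^n)·DF·π mod π²·O[[π_n]] ⊗ ℚ_p`, with `D = (1+X) d/dX`
(membership in `O[[X]] ⊗ ℚ_p` meaning uniformly bounded coefficients). -/
theorem statement17 (p : ℕ) [Fact p.Prime] (n : ℕ) (hn : 1 ≤ n)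
    (χ : ℤ_[p]) (hχ : ∃ u : ℤ_[p], χ = 1 + p ^ n * u)
    (F : PowerSeries ℚ_[p]) (hF : ∀ j, ‖coeff j F‖ ≤ 1) :
    (∃ A : PowerSeries ℚ_[p], (∀ j, ‖coeff j A‖ ≤ 1) ∧
      gammaSubst p χ F - F = (((1 + X) ^ (p ^ n) - 1 : PowerSeries ℚ_[p])) * A) ∧
    (∃ B : PowerSeries ℚ_[p], (∃ Cb : ℝ, ∀ j, ‖coeff j B‖ ≤ Cb) ∧
      gammaSubst p χ F - F -
          C (((χ - 1 : ℤ_[p]) : ℚ_[p]) / (p ^ n : ℚ_[p])) *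
            ((1 + X) * PowerSeries.derivativeFun F) *
            (((1 + X) ^ (p ^ n) - 1 : PowerSeries ℚ_[p]))
        = (((1 + X) ^ (p ^ n) - 1 : PowerSeries ℚ_[p])) ^ 2 * B) :=
  statement17_general p n χ hχ F hF
end
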